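/- Let r = (r¹,r²,r³) : U → ℝ³ be a smooth solution of the diagonalized drift flux system (S) on an open set U ⊆ ℝ². Define ω⁰ := r³ and ω^{j+1} := e^{r²−r¹} ∂_x ω^j for j ≥ 0. Then for every κ ∈ ℕ₀ one has ∂_t ω^κ + (r¹+r²) ∂_x ω^κ = 0 on U. -/

import Mathlib

/- STATEMENT 2: for a smooth solution of the diagonalized system (S), the
functions ω^κ (ω⁰ = r³, ω^{j+1} = e^{r²−r¹} ∂_x ω^j) satisfy
∂_t ω^κ + (r¹+r²) ∂_x ω^κ = 0. -/

open scoped ContDiff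

noncomputable section

/-- Partial derivative with respect to the first ("time") variable. -/
def pt (f : ℝ × ℝ → ℝ) (p : ℝ × ℝ) : ℝ := fderiv ℝ f p (1, 0)

/-- Partial derivative with respect to the second ("space") variable. -/
def px (f : ℝ × ℝ → ℝ) (p : ℝ × ℝ) : ℝ := fderiv ℝ f p (0, 1)

/-- ω⁰ := r³, ω^{j+1} := e^{r²−r¹} ∂_x ω^j. -/
def omegaFun (r₁ r₂ r₃ : ℝ × ℝ → ℝ) : ℕ → ℝ × ℝ → ℝ
  | 0 => r₃
  | j + 1 => fun p => Real.exp (r₂ p - r₁ p) * px (omegaFun r₁ r₂ r₃ j) p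

/-- Smoothness of a directional derivative of a smooth function on an open set. -/
lemma contDiffOn_pd {U : Set (ℝ × ℝ)} (hU : IsOpen U) {f : ℝ × ℝ → ℝ}
    (hf : ContDiffOn ℝ ∞ f U) (v : ℝ × ℝ) :
    ContDiffOn ℝ ∞ (fun p => fderiv ℝ f p v) U := by
  have h : ContDiffOn ℝ ∞ (fderiv ℝ f) U :=
    hf.fderiv_of_isOpen hU (le_of_eq (show (∞ : WithTop ℕ∞) + 1 = ∞ from rfl).symm)
  exact (ContinuousLinearMap.apply ℝ ℝ v).contDiff.comp_contDiffOn h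

lemma diffAt_of {U : Set (ℝ × ℝ)} (hU : IsOpen U) {f : ℝ × ℝ → ℝ}
    (hf : ContDiffOn ℝ ∞ f U) {p : ℝ × ℝ} (hp : p ∈ U) : DifferentiableAt ℝ f p :=
  (hf.contDiffAt (hU.mem_nhds hp)).differentiableAt (by norm_cast)

lemma pd_add {f g : ℝ × ℝ → ℝ} {p : ℝ × ℝ} (hf : DifferentiableAt ℝ f p)
    (hg : DifferentiableAt ℝ g p) (v : ℝ × ℝ) :
    fderiv ℝ (fun q => f q + g q) p v = fderiv ℝ f p v + fderiv ℝ g p v := by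
  rw [fderiv_fun_add hf hg]; rfl

lemma pd_mul {f g : ℝ × ℝ → ℝ} {p : ℝ × ℝ} (hf : DifferentiableAt ℝ f p)
    (hg : DifferentiableAt ℝ g p) (v : ℝ × ℝ) :
    fderiv ℝ (fun q => f q * g q) p v = f p * fderiv ℝ g p v + g p * fderiv ℝ f p v := by
  rw [fderiv_fun_mul hf hg]; simp [mul_comm]

lemma pd_expmul {r₁ r₂ φ : ℝ × ℝ → ℝ} {p : ℝ × ℝ}
    (h₁ : DifferentiableAt ℝ r₁ p) (h₂ : DifferentiableAt ℝ r₂ p)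
    (hφ : DifferentiableAt ℝ φ p) (v : ℝ × ℝ) :
    fderiv ℝ (fun q => Real.exp (r₂ q - r₁ q) * φ q) p v
      = Real.exp (r₂ p - r₁ p) *
        ((fderiv ℝ r₂ p v - fderiv ℝ r₁ p v) * φ p + fderiv ℝ φ p v) := by
  have he : HasFDerivAt (fun q => Real.exp (r₂ q - r₁ q))
      (Real.exp (r₂ p - r₁ p) • (fderiv ℝ r₂ p - fderiv ℝ r₁ p)) p :=
    (h₂.hasFDerivAt.sub h₁.hasFDerivAt).exp
  have h := (he.mul hφ.hasFDerivAt).fderiv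
  rw [show (fun q => Real.exp (r₂ q - r₁ q) * φ q) = (fun q => Real.exp (r₂ q - r₁ q)) * φ from rfl, h]; simp; ring

/-- Commutation of mixed partial derivatives for a smooth function on an open set. -/
lemma pd_comm {U : Set (ℝ × ℝ)} (hU : IsOpen U) {f : ℝ × ℝ → ℝ}
    (hf : ContDiffOn ℝ ∞ f U) {p : ℝ × ℝ} (hp : p ∈ U) (v w : ℝ × ℝ) :
    fderiv ℝ (fun q => fderiv ℝ f q w) p v = fderiv ℝ (fun q => fderiv ℝ f q v) p w := by
  have hF : ContDiffOn ℝ ∞ (fderiv ℝ f) U :=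
    hf.fderiv_of_isOpen hU (le_of_eq (show (∞ : WithTop ℕ∞) + 1 = ∞ from rfl).symm)
  have hFd : DifferentiableAt ℝ (fderiv ℝ f) p :=
    (hF.contDiffAt (hU.mem_nhds hp)).differentiableAt (by norm_cast)
  have key : ∀ u z : ℝ × ℝ,
      fderiv ℝ (fun q => fderiv ℝ f q z) p u = fderiv ℝ (fderiv ℝ f) p u z := by
    intro u z
    have h := (hFd.hasFDerivAt.clm_apply (hasFDerivAt_const z p)).fderiv
    rw [h]; simp
  have hsymm : IsSymmSndFDerivAt ℝ f p :=
    (hf.contDiffAt (hU.mem_nhds hp)).isSymmSndFDerivAt (by rw [minSmoothness_of_isRCLikeNormedField]; exact WithTop.coe_le_coe.mpr le_top)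
  rw [key v w, key w v]
  exact hsymm v w

theorem omega_kernel_of_B
    (U : Set (ℝ × ℝ)) (hU : IsOpen U)
    (r₁ r₂ r₃ : ℝ × ℝ → ℝ)
    (hr₁ : ContDiffOn ℝ (⊤ : ℕ∞) r₁ U) (hr₂ : ContDiffOn ℝ (⊤ : ℕ∞) r₂ U)
    (hr₃ : ContDiffOn ℝ (⊤ : ℕ∞) r₃ U)
    (hS₁ : ∀ p ∈ U, pt r₁ p + (r₁ p + r₂ p + 1) * px r₁ p = 0)
    (hS₂ : ∀ p ∈ U, pt r₂ p + (r₁ p + r₂ p - 1) * px r₂ p = 0)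
    (hS₃ : ∀ p ∈ U, pt r₃ p + (r₁ p + r₂ p) * px r₃ p = 0) :
    ∀ (κ : ℕ), ∀ p ∈ U,
      pt (omegaFun r₁ r₂ r₃ κ) p + (r₁ p + r₂ p) * px (omegaFun r₁ r₂ r₃ κ) p = 0 := by
  have hr₁' : ContDiffOn ℝ ∞ r₁ U := hr₁.of_le (by simp)
  have hr₂' : ContDiffOn ℝ ∞ r₂ U := hr₂.of_le (by simp)
  have hr₃' : ContDiffOn ℝ ∞ r₃ U := hr₃.of_le (by simp)
  have hωsm : ∀ j, ContDiffOn ℝ ∞ (omegaFun r₁ r₂ r₃ j) U := by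
    intro j
    induction j with
    | zero => exact hr₃'
    | succ j ih =>
      have hpx : ContDiffOn ℝ ∞ (px (omegaFun r₁ r₂ r₃ j)) U := contDiffOn_pd hU ih (0, 1)
      exact ((hr₂'.sub hr₁').exp).mul hpx
  intro κ
  induction κ with
  | zero => exact hS₃
  | succ j ih =>
    intro p hp
    set W := omegaFun r₁ r₂ r₃ j with hWdef
    have hWs : ContDiffOn ℝ ∞ W U := hωsm j
    have hφs : ContDiffOn ℝ ∞ (px W) U := contDiffOn_pd hU hWs (0, 1)
    have hts : ContDiffOn ℝ ∞ (pt W) U := contDiffOn_pd hU hWs (1, 0)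
    have d₁ := diffAt_of hU hr₁' hp
    have d₂ := diffAt_of hU hr₂' hp
    have dφ := diffAt_of hU hφs hp
    have dt := diffAt_of hU hts hp
    have succ_eq : omegaFun r₁ r₂ r₃ (j + 1) = fun q => Real.exp (r₂ q - r₁ q) * px W q := rfl
    have Ht : pt (omegaFun r₁ r₂ r₃ (j + 1)) p
        = Real.exp (r₂ p - r₁ p) * ((pt r₂ p - pt r₁ p) * px W p + pt (px W) p) := by
      rw [show pt (omegaFun r₁ r₂ r₃ (j + 1)) p
          = fderiv ℝ (fun q => Real.exp (r₂ q - r₁ q) * px W q) p (1, 0) by rw [pt, succ_eq]]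
      exact pd_expmul d₁ d₂ dφ (1, 0)
    have Hx : px (omegaFun r₁ r₂ r₃ (j + 1)) p
        = Real.exp (r₂ p - r₁ p) * ((px r₂ p - px r₁ p) * px W p + px (px W) p) := by
      rw [show px (omegaFun r₁ r₂ r₃ (j + 1)) p
          = fderiv ℝ (fun q => Real.exp (r₂ q - r₁ q) * px W q) p (0, 1) by rw [px, succ_eq]]
      exact pd_expmul d₁ d₂ dφ (0, 1)
    -- differentiate the transport equation for W in x
    have hzero : fderiv ℝ (fun q => pt W q + (r₁ q + r₂ q) * px W q) p = 0 := by
      have hev : (fun q => pt W q + (r₁ q + r₂ q) * px W q) =ᶠ[nhds p] (fun _ => (0 : ℝ)) :=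
        Filter.eventuallyEq_of_mem (hU.mem_nhds hp) ih
      rw [hev.fderiv_eq]
      exact fderiv_const_apply 0
    have e0 : fderiv ℝ (fun q => pt W q + (r₁ q + r₂ q) * px W q) p (0, 1) = 0 := by
      rw [hzero]; rfl
    have e1 : fderiv ℝ (fun q => pt W q + (r₁ q + r₂ q) * px W q) p (0, 1)
        = fderiv ℝ (pt W) p (0, 1) + fderiv ℝ (fun q => (r₁ q + r₂ q) * px W q) p (0, 1) :=
      pd_add dt ((d₁.add d₂).mul dφ) (0, 1)
    have e2 : fderiv ℝ (fun q => (r₁ q + r₂ q) * px W q) p (0, 1)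
        = (r₁ p + r₂ p) * fderiv ℝ (px W) p (0, 1)
          + px W p * fderiv ℝ (fun q => r₁ q + r₂ q) p (0, 1) :=
      pd_mul (d₁.add d₂) dφ (0, 1)
    have e3 : fderiv ℝ (fun q => r₁ q + r₂ q) p (0, 1)
        = fderiv ℝ r₁ p (0, 1) + fderiv ℝ r₂ p (0, 1) := pd_add d₁ d₂ (0, 1)
    have hx0 : px (pt W) p + ((r₁ p + r₂ p) * px (px W) p
        + px W p * (px r₁ p + px r₂ p)) = 0 := by
      have := e0
      rw [e1, e2, e3] at this
      exact this
    have hcomm : pt (px W) p = px (pt W) p := pd_comm hU hWs hp (1, 0) (0, 1)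
    have h₁ := hS₁ p hp
    have h₂ := hS₂ p hp
    rw [Ht, Hx]
    linear_combination (Real.exp (r₂ p - r₁ p) * px W p) * h₂
      - (Real.exp (r₂ p - r₁ p) * px W p) * h₁
      + Real.exp (r₂ p - r₁ p) * hcomm + Real.exp (r₂ p - r₁ p) * hx0

end
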